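/- The function θ₃(0,τ) is nonvanishing for every τ in the upper half plane. -/

import Mathlib

open Complex

/-- `θ₃(0,τ) = ∏_{j≥1} (1−q^j)(1+q^{j−1/2})²` with `q^{j−1/2} = e^{2πiτ(j−1/2)}`. -/
noncomputable def jacobiTheta3Zero (τ : ℂ) : ℂ :=
  ∏' j : ℕ,
    ((1 - Complex.exp (2 * (Real.pi : ℂ) * Complex.I * τ) ^ (j + 1)) *
      (1 + Complex.exp (2 * (Real.pi : ℂ) * Complex.I * τ * ((j : ℂ) + 1 / 2))) ^ 2)

/-!
With `q = e^{2πiτ}` and `e^{2πiτ(n+1/2)} = e^{πiτ} qⁿ`, the product is `P(-q) · P(e^{πiτ})²` where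
`P(a) = ∏ₙ (1 + a qⁿ)`. For `‖a‖ < 1` and `‖q‖ < 1` the product `P(a)` converges absolutely, since
`∑ ‖a qⁿ‖` is geometric, and none of its factors vanishes, so it is nonzero.
-/

open scoped Real

section OneAddMulPow

variable {R : Type*} [NormedCommRing R] [NormOneClass R] {a q : R}

lemma summable_norm_mul_pow (a : R) (hq : ‖q‖ < 1) : Summable fun n : ℕ ↦ ‖a * q ^ n‖ :=
  .of_nonneg_of_le (fun _ ↦ norm_nonneg _) (fun _ ↦ (norm_mul_le _ _).trans
      (mul_le_mul_of_nonneg_left (norm_pow_le _ _) (norm_nonneg _)))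
    ((summable_geometric_of_lt_one (norm_nonneg _) hq).mul_left ‖a‖)

lemma multipliable_one_add_mul_pow [CompleteSpace R] (a : R) (hq : ‖q‖ < 1) :
    Multipliable fun n : ℕ ↦ 1 + a * q ^ n :=
  multipliable_one_add_of_summable (summable_norm_mul_pow a hq)

lemma one_add_ne_zero_of_norm_lt_one {x : R} (hx : ‖x‖ < 1) : 1 + x ≠ 0 := by
  intro h
  rw [eq_neg_of_add_eq_zero_right h, norm_neg, norm_one] at hx
  exact hx.false

lemma tprod_one_add_mul_pow_ne_zero [CompleteSpace R] [NormMulClass R]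
    (ha : ‖a‖ < 1) (hq : ‖q‖ < 1) : ∏' n : ℕ, (1 + a * q ^ n) ≠ 0 := by
  refine tprod_one_add_ne_zero_of_summable (fun n ↦ one_add_ne_zero_of_norm_lt_one ?_)
    (summable_norm_mul_pow a hq)
  rw [norm_mul, norm_pow]
  exact mul_lt_one_of_nonneg_of_lt_one_left (norm_nonneg _) ha
    (pow_le_one₀ (norm_nonneg _) hq.le)

end OneAddMulPow

lemma norm_cexp_mul_I_mul_lt_one {c : ℝ} (hc : 0 < c) {τ : ℂ} (hτ : 0 < τ.im) :
    ‖cexp (c * I * τ)‖ < 1 := by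
  rw [norm_exp, Real.exp_lt_one_iff]
  simp only [mul_re, mul_im, ofReal_re, ofReal_im, I_re, I_im]
  nlinarith

lemma jacobiTheta3Zero_eq_tprod_mul_sq (τ : ℂ) (hτ : 0 < τ.im) :
    jacobiTheta3Zero τ = (∏' n : ℕ, (1 + -cexp (2 * π * I * τ) * cexp (2 * π * I * τ) ^ n)) *
      (∏' n : ℕ, (1 + cexp (π * I * τ) * cexp (2 * π * I * τ) ^ n)) ^ 2 := by
  have hq : ‖cexp (2 * π * I * τ)‖ < 1 := UpperHalfPlane.norm_exp_two_pi_I_lt_one ⟨τ, hτ⟩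
  rw [← Multipliable.tprod_pow (multipliable_one_add_mul_pow _ hq),
    ← Multipliable.tprod_mul (multipliable_one_add_mul_pow _ hq)
      ((multipliable_one_add_mul_pow _ hq).pow 2)]
  refine tprod_congr fun n ↦ ?_
  have half_shift :
      cexp (2 * π * I * τ * (n + 1 / 2)) = cexp (π * I * τ) * cexp (2 * π * I * τ) ^ n := by
    rw [← Complex.exp_nat_mul, ← Complex.exp_add]
    ring_nf
  rw [half_shift, pow_succ']
  ring

/-- `θ₃(0,τ)` is nonvanishing for every `τ` in the upper half plane. -/
theorem jacobiTheta3Zero_ne_zero (τ : ℂ) (hτ : 0 < τ.im) : jacobiTheta3Zero τ ≠ 0 := by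
  have hq : ‖cexp (2 * π * I * τ)‖ < 1 := UpperHalfPlane.norm_exp_two_pi_I_lt_one ⟨τ, hτ⟩
  have hs : ‖cexp (π * I * τ)‖ < 1 := norm_cexp_mul_I_mul_lt_one Real.pi_pos hτ
  rw [jacobiTheta3Zero_eq_tprod_mul_sq τ hτ]
  exact mul_ne_zero (tprod_one_add_mul_pow_ne_zero (by rwa [norm_neg]) hq)
    (pow_ne_zero 2 (tprod_one_add_mul_pow_ne_zero hs hq))
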